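/- Let u, v, w ∈ ℝ^N, φ_{abc} = u_a·v_b·w_c, D = λ_d + λ_p·N·(α₁+α₂+α₃) + λ_t·N^{3/2}, and assume the solution condition λ₂ + (D/N³)·|u|²·|v|²·|w|² = 0. Then the Hessian of V at φ annihilates the Goldstone directions: for any u' ∈ ℝ^N with ⟨u',u⟩ = 0, H(φ)(u'⊗v⊗w) = 0; for any v' with ⟨v',v⟩ = 0, H(φ)(u⊗v'⊗w) = 0; and for any w' with ⟨w',w⟩ = 0, H(φ)(u⊗v⊗w') = 0. -/

import Mathlib

open Finset

/-- The potential of the quartic `O(N)^3` tensor model. -/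
noncomputable def potV (N : ℕ) (l2 ld lp lt a1 a2 a3 : ℝ)
    (φ : Fin N → Fin N → Fin N → ℝ) : ℝ :=
  l2 / 2 * (∑ a, ∑ b, ∑ c, (φ a b c) ^ 2)
  + ld / (4 * (N : ℝ) ^ 3) * (∑ a, ∑ b, ∑ c, (φ a b c) ^ 2) ^ 2
  + lp / (4 * (N : ℝ) ^ 2) *
      (a1 * ∑ a, ∑ b, ∑ c, ∑ a', ∑ b', ∑ c',
          φ a b c * φ a b' c' * φ a' b' c' * φ a' b c
       + a2 * ∑ a, ∑ b, ∑ c, ∑ a', ∑ b', ∑ c',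
          φ a b c * φ a' b c' * φ a' b' c' * φ a b' c
       + a3 * ∑ a, ∑ b, ∑ c, ∑ a', ∑ b', ∑ c',
          φ a b c * φ a' b' c * φ a' b' c' * φ a b c')
  + lt / (4 * (N : ℝ) ^ ((3 : ℝ) / 2)) *
      ∑ a, ∑ b, ∑ c, ∑ a', ∑ b', ∑ c',
        φ a b c * φ a b' c' * φ a' b c' * φ a' b' c

/-- The field equations of the quartic `O(N)^3` tensor model (vanishing gradient of `potV`). -/
def FieldEqs (N : ℕ) (l2 ld lp lt a1 a2 a3 : ℝ)
    (φ : Fin N → Fin N → Fin N → ℝ) : Prop :=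
  ∀ a b c,
    l2 * φ a b c
    + ld / (N : ℝ) ^ 3 * (∑ a', ∑ b', ∑ c', (φ a' b' c') ^ 2) * φ a b c
    + lp / (N : ℝ) ^ 2 *
        (a1 * ∑ a', ∑ b', ∑ c', φ a b' c' * φ a' b' c' * φ a' b c
         + a2 * ∑ a', ∑ b', ∑ c', φ a' b c' * φ a' b' c' * φ a b' c
         + a3 * ∑ a', ∑ b', ∑ c', φ a' b' c * φ a' b' c' * φ a b c')
    + lt / (N : ℝ) ^ ((3 : ℝ) / 2) *
        ∑ a', ∑ b', ∑ c', φ a b' c' * φ a' b c' * φ a' b' c = 0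

/-- The Hessian of `potV` at `φ` (the matrix of second partial derivatives
`H(φ)_{abc,a'b'c'} = ∂²V/∂φ_{abc}∂φ_{a'b'c'}`), acting on a tensor field `χ` by
`(H(φ)χ)_{abc} = Σ_{a'b'c'} H(φ)_{abc,a'b'c'} χ_{a'b'c'}`. -/
noncomputable def hessApply (N : ℕ) (l2 ld lp lt a1 a2 a3 : ℝ)
    (φ χ : Fin N → Fin N → Fin N → ℝ) : Fin N → Fin N → Fin N → ℝ :=
  fun a b c =>
    deriv (fun s : ℝ =>
      deriv (fun t : ℝ =>
        potV N l2 ld lp lt a1 a2 a3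
          (fun a' b' c' => φ a' b' c' + t * χ a' b' c'
            + s * (if a' = a ∧ b' = b ∧ c' = c then (1 : ℝ) else 0))) 0) 0

/-!
Since `V` is smooth, its second derivative is symmetric, so `H(φ)χ` is the derivative along
`t ↦ φ + tχ` of the gradient `∇V`. At a rank-one tensor `ψ = x ⊗ y ⊗ z` each quartic invariant
with one argument `δ` and three arguments `ψ` equals `|x|²|y|²|z|² ⟨ψ, δ⟩`, so
`∇V(ψ) = (λ₂ + (D/N³)|x|²|y|²|z|²) ψ`. A Goldstone direction moves one factor of `φ`
orthogonally, so `φ + tχ` stays rank one and the norms `|x|², |y|², |z|²` are stationary at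
`t = 0`. With the solution condition, the scalar factor and its derivative both vanish at
`t = 0`, so `∇V(φ + tχ)` has zero derivative there.
-/

theorem lineDeriv_lineDeriv_comm {E F : Type*} [NormedAddCommGroup E] [NormedSpace ℝ E]
    [NormedAddCommGroup F] [NormedSpace ℝ F] {f : E → F} (hf : ContDiff ℝ 2 f) (x v w : E) :
    lineDeriv ℝ (fun y => lineDeriv ℝ f y v) x w
      = lineDeriv ℝ (fun y => lineDeriv ℝ f y w) x v := by
  have hf₁ : Differentiable ℝ f := hf.differentiable (by norm_num)
  have hf₂ : Differentiable ℝ (fderiv ℝ f) :=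
    (hf.fderiv_right (m := 1) (by norm_num)).differentiable (by norm_num)
  have lineDeriv_f (u : E) : (fun y => lineDeriv ℝ f y u) = fun y => fderiv ℝ f y u :=
    funext fun y => (hf₁ y).lineDeriv_eq_fderiv
  have lineDeriv_fderiv (u u' : E) :
      lineDeriv ℝ (fun y => fderiv ℝ f y u) x u' = fderiv ℝ (fderiv ℝ f) x u' u := by
    rw [((hf₂.clm_apply (differentiable_const u)) x).lineDeriv_eq_fderiv,
      fderiv_clm_apply (hf₂ x) (differentiableAt_const u)]
    simp
  rw [lineDeriv_f, lineDeriv_f, lineDeriv_fderiv, lineDeriv_fderiv, hf.contDiffAt.isSymmSndFDerivAt (by simp)]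

lemma hasDerivAt_affine_line (p q : ℝ) : HasDerivAt (fun t : ℝ => p + t * q) q 0 := by
  simpa using ((hasDerivAt_id (0 : ℝ)).mul_const q).const_add p

lemma sum_mul_sum_mul_sum {ι : Type*} [Fintype ι] (A B C : ι → ℝ) :
    ∑ a, ∑ b, ∑ c, A a * B b * C c = (∑ a, A a) * (∑ b, B b) * (∑ c, C c) := by
  simp only [← sum_mul, ← mul_sum]

lemma sum_mul_sum_mul_sum_mul_sum_mul_sum_mul_sum {ι : Type*} [Fintype ι]
    (A B C A' B' C' : ι → ℝ) :
    ∑ a, ∑ b, ∑ c, ∑ a', ∑ b', ∑ c', A a * B b * C c * A' a' * B' b' * C' c'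
      = (∑ a, A a) * (∑ b, B b) * (∑ c, C c) * (∑ a', A' a') * (∑ b', B' b') * (∑ c', C' c') := by
  simp only [← sum_mul, ← mul_sum]

lemma hasDerivAt_dotProduct_self_line {ι : Type*} [Fintype ι] {x x' : ι → ℝ}
    (h : x' ⬝ᵥ x = 0) : HasDerivAt (fun t : ℝ => (x + t • x') ⬝ᵥ (x + t • x')) 0 0 := by
  have hpoly : (fun t : ℝ => (x + t • x') ⬝ᵥ (x + t • x'))
      = fun t => x ⬝ᵥ x + t ^ 2 * (x' ⬝ᵥ x') := by
    ext t
    simp only [add_dotProduct, dotProduct_add, smul_dotProduct, dotProduct_smul,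
      dotProduct_comm x x', h, smul_eq_mul]
    ring
  rw [hpoly]
  simpa using ((hasDerivAt_pow 2 (0 : ℝ)).mul_const (x' ⬝ᵥ x')).const_add (x ⬝ᵥ x)

section Contractions

variable {N : ℕ}

def rankOne (x y z : Fin N → ℝ) : Fin N → Fin N → Fin N → ℝ := fun a b c => x a * y b * z c

def tensorDot (f g : Fin N → Fin N → Fin N → ℝ) : ℝ := ∑ i : Fin N × Fin N × Fin N, ↿f i * ↿g i

def quarticContraction {ι : Type*} [Fintype ι] (e : Fin 4 → ι → Fin N × Fin N × Fin N)
    (f₁ f₂ f₃ f₄ : Fin N → Fin N → Fin N → ℝ) : ℝ :=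
  ∑ i, ↿f₁ (e 0 i) * ↿f₂ (e 1 i) * ↿f₃ (e 2 i) * ↿f₄ (e 3 i)

abbrev QuarticPattern (N : ℕ) :=
  Fin 4 → (Fin N × Fin N × Fin N) × (Fin N × Fin N × Fin N) → Fin N × Fin N × Fin N

def pillow₁ : QuarticPattern N := fun k ((a, b, c), (a', b', c')) =>
  ![(a, b, c), (a, b', c'), (a', b', c'), (a', b, c)] k

def pillow₂ : QuarticPattern N := fun k ((a, b, c), (a', b', c')) =>
  ![(a, b, c), (a', b, c'), (a', b', c'), (a, b', c)] k

def pillow₃ : QuarticPattern N := fun k ((a, b, c), (a', b', c')) =>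
  ![(a, b, c), (a', b', c), (a', b', c'), (a, b, c')] k

def tetrahedron : QuarticPattern N := fun k ((a, b, c), (a', b', c')) =>
  ![(a, b, c), (a, b', c'), (a', b, c'), (a', b', c)] k

lemma tensorDot_rankOne (x y z x' y' z' : Fin N → ℝ) :
    tensorDot (rankOne x y z) (rankOne x' y' z') = (x ⬝ᵥ x') * (y ⬝ᵥ y') * (z ⬝ᵥ z') := by
  simp only [dotProduct, ← sum_mul_sum_mul_sum]
  simp only [tensorDot, rankOne, Fintype.sum_prod_type, Function.HasUncurry.uncurry, id_eq]
  ac_rfl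

variable (x₁ y₁ z₁ x₂ y₂ z₂ x₃ y₃ z₃ x₄ y₄ z₄ : Fin N → ℝ)

lemma quarticContraction_pillow₁_rankOne :
    quarticContraction pillow₁ (rankOne x₁ y₁ z₁) (rankOne x₂ y₂ z₂) (rankOne x₃ y₃ z₃)
        (rankOne x₄ y₄ z₄)
      = (x₁ ⬝ᵥ x₂) * (y₁ ⬝ᵥ y₄) * (z₁ ⬝ᵥ z₄) * (x₃ ⬝ᵥ x₄) * (y₂ ⬝ᵥ y₃) * (z₂ ⬝ᵥ z₃) := by
  simp only [dotProduct, ← sum_mul_sum_mul_sum_mul_sum_mul_sum_mul_sum]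
  simp only [quarticContraction, pillow₁, rankOne, Fintype.sum_prod_type,
    Function.HasUncurry.uncurry, id_eq, Matrix.cons_val_zero, Matrix.cons_val_one, Matrix.cons_val]
  ac_rfl

lemma quarticContraction_pillow₂_rankOne :
    quarticContraction pillow₂ (rankOne x₁ y₁ z₁) (rankOne x₂ y₂ z₂) (rankOne x₃ y₃ z₃)
        (rankOne x₄ y₄ z₄)
      = (x₁ ⬝ᵥ x₄) * (y₁ ⬝ᵥ y₂) * (z₁ ⬝ᵥ z₄) * (x₂ ⬝ᵥ x₃) * (y₃ ⬝ᵥ y₄) * (z₂ ⬝ᵥ z₃) := by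
  simp only [dotProduct, ← sum_mul_sum_mul_sum_mul_sum_mul_sum_mul_sum]
  simp only [quarticContraction, pillow₂, rankOne, Fintype.sum_prod_type,
    Function.HasUncurry.uncurry, id_eq, Matrix.cons_val_zero, Matrix.cons_val_one, Matrix.cons_val]
  ac_rfl

lemma quarticContraction_pillow₃_rankOne :
    quarticContraction pillow₃ (rankOne x₁ y₁ z₁) (rankOne x₂ y₂ z₂) (rankOne x₃ y₃ z₃)
        (rankOne x₄ y₄ z₄)
      = (x₁ ⬝ᵥ x₄) * (y₁ ⬝ᵥ y₄) * (z₁ ⬝ᵥ z₂) * (x₂ ⬝ᵥ x₃) * (y₂ ⬝ᵥ y₃) * (z₃ ⬝ᵥ z₄) := by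
  simp only [dotProduct, ← sum_mul_sum_mul_sum_mul_sum_mul_sum_mul_sum]
  simp only [quarticContraction, pillow₃, rankOne, Fintype.sum_prod_type,
    Function.HasUncurry.uncurry, id_eq, Matrix.cons_val_zero, Matrix.cons_val_one, Matrix.cons_val]
  ac_rfl

lemma quarticContraction_tetrahedron_rankOne :
    quarticContraction tetrahedron (rankOne x₁ y₁ z₁) (rankOne x₂ y₂ z₂) (rankOne x₃ y₃ z₃)
        (rankOne x₄ y₄ z₄)
      = (x₁ ⬝ᵥ x₂) * (y₁ ⬝ᵥ y₃) * (z₁ ⬝ᵥ z₄) * (x₃ ⬝ᵥ x₄) * (y₂ ⬝ᵥ y₄) * (z₂ ⬝ᵥ z₃) := by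
  simp only [dotProduct, ← sum_mul_sum_mul_sum_mul_sum_mul_sum_mul_sum]
  simp only [quarticContraction, tetrahedron, rankOne, Fintype.sum_prod_type,
    Function.HasUncurry.uncurry, id_eq, Matrix.cons_val_zero, Matrix.cons_val_one, Matrix.cons_val]
  ac_rfl

lemma hasDerivAt_tensorDot_line (ψ δ : Fin N → Fin N → Fin N → ℝ) :
    HasDerivAt (fun t : ℝ => tensorDot (ψ + t • δ) (ψ + t • δ)) (2 * tensorDot ψ δ) 0 := by
  refine (HasDerivAt.fun_sum (u := univ) fun i _ =>
    (hasDerivAt_affine_line (↿ψ i) (↿δ i)).fun_mul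
      (hasDerivAt_affine_line (↿ψ i) (↿δ i))).congr_deriv ?_
  simp only [zero_mul, add_zero, tensorDot, mul_sum]
  exact sum_congr rfl fun _ _ => by ring

lemma hasDerivAt_quarticContraction_line {ι : Type*} [Fintype ι]
    (e : Fin 4 → ι → Fin N × Fin N × Fin N) (ψ δ : Fin N → Fin N → Fin N → ℝ) :
    HasDerivAt (fun t : ℝ => quarticContraction e (ψ + t • δ) (ψ + t • δ) (ψ + t • δ) (ψ + t • δ))
      (quarticContraction e δ ψ ψ ψ + quarticContraction e ψ δ ψ ψ + quarticContraction e ψ ψ δ ψ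
        + quarticContraction e ψ ψ ψ δ) 0 := by
  refine (HasDerivAt.fun_sum (u := univ) fun i _ =>
    (((hasDerivAt_affine_line (↿ψ (e 0 i)) (↿δ (e 0 i))).fun_mul
      (hasDerivAt_affine_line (↿ψ (e 1 i)) (↿δ (e 1 i)))).fun_mul
      (hasDerivAt_affine_line (↿ψ (e 2 i)) (↿δ (e 2 i)))).fun_mul
      (hasDerivAt_affine_line (↿ψ (e 3 i)) (↿δ (e 3 i)))).congr_deriv ?_
  simp only [zero_mul, add_zero, quarticContraction, ← sum_add_distrib]
  exact sum_congr rfl fun _ _ => by ring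

end Contractions

section Potential

variable {N : ℕ} (l2 ld lp lt a1 a2 a3 : ℝ)

lemma potV_eq_sum_contractions (ψ : Fin N → Fin N → Fin N → ℝ) :
    potV N l2 ld lp lt a1 a2 a3 ψ
      = l2 / 2 * tensorDot ψ ψ + ld / (4 * (N : ℝ) ^ 3) * tensorDot ψ ψ ^ 2
        + lp / (4 * (N : ℝ) ^ 2) * (a1 * quarticContraction pillow₁ ψ ψ ψ ψ
          + a2 * quarticContraction pillow₂ ψ ψ ψ ψ + a3 * quarticContraction pillow₃ ψ ψ ψ ψ)
        + lt / (4 * (N : ℝ) ^ ((3 : ℝ) / 2)) * quarticContraction tetrahedron ψ ψ ψ ψ := by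
  simp [potV, tensorDot, quarticContraction, pillow₁, pillow₂, pillow₃, tetrahedron,
    Fintype.sum_prod_type, Function.HasUncurry.uncurry, sq]

lemma contDiff_potV : ContDiff ℝ 2 (potV N l2 ld lp lt a1 a2 a3) := by
  unfold potV
  fun_prop

/-- The coefficient `D / N³` of the statement, divided out termwise. -/
noncomputable def rankOneCoupling (N : ℕ) (ld lp lt a1 a2 a3 : ℝ) : ℝ :=
  ld / (N : ℝ) ^ 3 + lp / (N : ℝ) ^ 2 * (a1 + a2 + a3) + lt / (N : ℝ) ^ ((3 : ℝ) / 2)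

lemma rankOneCoupling_eq {N : ℕ} (hN : 0 < (N : ℝ)) (ld lp lt a1 a2 a3 : ℝ) :
    rankOneCoupling N ld lp lt a1 a2 a3
      = (ld + lp * N * (a1 + a2 + a3) + lt * (N : ℝ) ^ ((3 : ℝ) / 2)) / (N : ℝ) ^ 3 := by
  have hcube : (N : ℝ) ^ 3 = (N : ℝ) ^ ((3 : ℝ) / 2) * (N : ℝ) ^ ((3 : ℝ) / 2) := by
    rw [← Real.rpow_add hN]; norm_num
  have hpos : 0 < (N : ℝ) ^ ((3 : ℝ) / 2) := Real.rpow_pos_of_pos hN _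
  rw [rankOneCoupling]
  field_simp
  linear_combination lt * hcube

lemma hasLineDerivAt_potV_rankOne (x y z x' y' z' : Fin N → ℝ) :
    HasLineDerivAt ℝ (potV N l2 ld lp lt a1 a2 a3)
      ((l2 + rankOneCoupling N ld lp lt a1 a2 a3 * ((x ⬝ᵥ x) * (y ⬝ᵥ y) * (z ⬝ᵥ z)))
        * ((x ⬝ᵥ x') * (y ⬝ᵥ y') * (z ⬝ᵥ z')))
      (rankOne x y z) (rankOne x' y' z') := by
  set ψ := rankOne x y z
  set δ := rankOne x' y' z'
  have hq := hasDerivAt_tensorDot_line ψ δ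
  unfold HasLineDerivAt
  simp only [potV_eq_sum_contractions]
  refine HasDerivAt.congr_deriv (((hq.const_mul (l2 / 2)).fun_add
      ((hq.fun_pow 2).const_mul (ld / (4 * (N : ℝ) ^ 3)))).fun_add
      ((((hasDerivAt_quarticContraction_line pillow₁ ψ δ).const_mul a1).fun_add
        ((hasDerivAt_quarticContraction_line pillow₂ ψ δ).const_mul a2)).fun_add
        ((hasDerivAt_quarticContraction_line pillow₃ ψ δ).const_mul a3) |>.const_mul
          (lp / (4 * (N : ℝ) ^ 2))) |>.fun_add
      ((hasDerivAt_quarticContraction_line tetrahedron ψ δ).const_mul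
        (lt / (4 * (N : ℝ) ^ ((3 : ℝ) / 2))))) ?_
  simp only [ψ, δ, zero_smul, add_zero, tensorDot_rankOne, quarticContraction_pillow₁_rankOne,
    quarticContraction_pillow₂_rankOne, quarticContraction_pillow₃_rankOne,
    quarticContraction_tetrahedron_rankOne, dotProduct_comm x' x, dotProduct_comm y' y,
    dotProduct_comm z' z, rankOneCoupling]
  ring

lemma hessApply_apply_eq_deriv_lineDeriv (φ χ : Fin N → Fin N → Fin N → ℝ) (a b c : Fin N) :
    hessApply N l2 ld lp lt a1 a2 a3 φ χ a b c
      = deriv (fun t : ℝ => lineDeriv ℝ (potV N l2 ld lp lt a1 a2 a3) (φ + t • χ)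
          (rankOne (Pi.single a 1) (Pi.single b 1) (Pi.single c 1))) 0 := by
  set δ := rankOne (Pi.single a 1) (Pi.single b 1) (Pi.single c 1)
  have hδ : (fun a' b' c' => if a' = a ∧ b' = b ∧ c' = c then (1 : ℝ) else 0) = δ := by
    ext a' b' c'
    by_cases ha : a' = a <;> by_cases hb : b' = b <;> by_cases hc : c' = c <;>
      simp [δ, rankOne, ha, hb, hc]
  calc hessApply N l2 ld lp lt a1 a2 a3 φ χ a b c
      = lineDeriv ℝ (fun ψ => lineDeriv ℝ (potV N l2 ld lp lt a1 a2 a3) ψ χ) φ δ := by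
        simp only [hessApply, lineDeriv, ← hδ]
        congr! 5 with s t
        ext a' b' c'
        simp only [Pi.add_apply, Pi.smul_apply, smul_eq_mul]
        ring
    _ = lineDeriv ℝ (fun ψ => lineDeriv ℝ (potV N l2 ld lp lt a1 a2 a3) ψ δ) φ χ :=
        lineDeriv_lineDeriv_comm (contDiff_potV ..) _ _ _

lemma hessApply_eq_zero_of_rankOne_curve {φ χ : Fin N → Fin N → Fin N → ℝ}
    {X Y Z : ℝ → Fin N → ℝ} (hcurve : ∀ t : ℝ, φ + t • χ = rankOne (X t) (Y t) (Z t))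
    (hX : DifferentiableAt ℝ X 0) (hY : DifferentiableAt ℝ Y 0) (hZ : DifferentiableAt ℝ Z 0)
    (hXX : HasDerivAt (fun t => X t ⬝ᵥ X t) 0 0) (hYY : HasDerivAt (fun t => Y t ⬝ᵥ Y t) 0 0)
    (hZZ : HasDerivAt (fun t => Z t ⬝ᵥ Z t) 0 0)
    (hcrit : l2 + rankOneCoupling N ld lp lt a1 a2 a3
      * ((X 0 ⬝ᵥ X 0) * (Y 0 ⬝ᵥ Y 0) * (Z 0 ⬝ᵥ Z 0)) = 0) :
    hessApply N l2 ld lp lt a1 a2 a3 φ χ = 0 := by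
  funext a b c
  rw [hessApply_apply_eq_deriv_lineDeriv]
  simp only [hcurve, (hasLineDerivAt_potV_rankOne ..).lineDeriv, dotProduct_single_one]
  have hκ := (((hXX.fun_mul hYY).fun_mul hZZ).const_mul
    (rankOneCoupling N ld lp lt a1 a2 a3)).const_add l2
  have hentry : DifferentiableAt ℝ (fun t => X t a * Y t b * Z t c) 0 := by fun_prop
  rw [(hκ.fun_mul hentry.hasDerivAt).deriv, hcrit]
  simp

end Potential

/-- At a rank-one solution `φ = u ⊗ v ⊗ w`, the Hessian of `V` annihilates the Goldstone
directions `u' ⊗ v ⊗ w`, `u ⊗ v' ⊗ w`, `u ⊗ v ⊗ w'` with `u' ⊥ u`, `v' ⊥ v`, `w' ⊥ w`. -/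
theorem rank_one_goldstone_modes (N : ℕ) (hN : 1 ≤ N)
    (l2 ld lp lt a1 a2 a3 : ℝ)
    (u v w : Fin N → ℝ)
    (φ : Fin N → Fin N → Fin N → ℝ) (hφ : φ = fun a b c => u a * v b * w c)
    (D : ℝ)
    (hD : D = ld + lp * (N : ℝ) * (a1 + a2 + a3) + lt * (N : ℝ) ^ ((3 : ℝ) / 2))
    (hsol : l2 + D / (N : ℝ) ^ 3 *
      ((∑ a, (u a) ^ 2) * (∑ b, (v b) ^ 2) * (∑ c, (w c) ^ 2)) = 0) :
    (∀ u' : Fin N → ℝ, (∑ a, u' a * u a) = 0 →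
      hessApply N l2 ld lp lt a1 a2 a3 φ (fun a b c => u' a * v b * w c) = 0)
    ∧ (∀ v' : Fin N → ℝ, (∑ b, v' b * v b) = 0 →
      hessApply N l2 ld lp lt a1 a2 a3 φ (fun a b c => u a * v' b * w c) = 0)
    ∧ (∀ w' : Fin N → ℝ, (∑ c, w' c * w c) = 0 →
      hessApply N l2 ld lp lt a1 a2 a3 φ (fun a b c => u a * v b * w' c) = 0) := by
  have hcrit : l2 + rankOneCoupling N ld lp lt a1 a2 a3 * ((u ⬝ᵥ u) * (v ⬝ᵥ v) * (w ⬝ᵥ w)) = 0 := by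
    rw [rankOneCoupling_eq (by exact_mod_cast hN), ← hD]
    simpa [dotProduct, sq] using hsol
  subst hφ
  refine ⟨fun u' hu' => ?_, fun v' hv' => ?_, fun w' hw' => ?_⟩
  · refine hessApply_eq_zero_of_rankOne_curve _ _ _ _ _ _ _ (X := fun t => u + t • u')
      (Y := fun _ => v) (Z := fun _ => w) (fun t => ?_) (by fun_prop) (by fun_prop) (by fun_prop)
      (hasDerivAt_dotProduct_self_line hu') (hasDerivAt_const _ _) (hasDerivAt_const _ _)
      (by simpa using hcrit)
    ext; simp only [rankOne, Pi.add_apply, Pi.smul_apply, smul_eq_mul]; ring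
  · refine hessApply_eq_zero_of_rankOne_curve _ _ _ _ _ _ _ (X := fun _ => u)
      (Y := fun t => v + t • v') (Z := fun _ => w) (fun t => ?_) (by fun_prop) (by fun_prop)
      (by fun_prop) (hasDerivAt_const _ _) (hasDerivAt_dotProduct_self_line hv')
      (hasDerivAt_const _ _) (by simpa using hcrit)
    ext; simp only [rankOne, Pi.add_apply, Pi.smul_apply, smul_eq_mul]; ring
  · refine hessApply_eq_zero_of_rankOne_curve _ _ _ _ _ _ _ (X := fun _ => u) (Y := fun _ => v)
      (Z := fun t => w + t • w') (fun t => ?_) (by fun_prop) (by fun_prop) (by fun_prop)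
      (hasDerivAt_const _ _) (hasDerivAt_const _ _) (hasDerivAt_dotProduct_self_line hw')
      (by simpa using hcrit)
    ext; simp only [rankOne, Pi.add_apply, Pi.smul_apply, smul_eq_mul]; ring
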